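/- Let K ⊆ ℝ² be a compact convex set with nonempty interior and let σ = st(K) be its Steiner point. Then σ is the unique minimizer of the function x ↦ Area(F_x(K)): for every x ∈ ℝ² with x ≠ σ, Area(F_σ(K)) < Area(F_x(K)). -/

import Mathlib

open Metric Real Set MeasureTheory
open scoped RealInnerProductSpace

noncomputable section

/-- The Euclidean plane. -/
abbrev E2 := EuclideanSpace ℝ (Fin 2)

/-- The unit vector `u_θ = (cos θ, sin θ)`. -/
def uvec (θ : ℝ) : E2 := (WithLp.equiv 2 (Fin 2 → ℝ)).symm ![Real.cos θ, Real.sin θ]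

/-- The vector `v_θ = (−sin θ, cos θ)`. -/
def vvec (θ : ℝ) : E2 := (WithLp.equiv 2 (Fin 2 → ℝ)).symm ![-Real.sin θ, Real.cos θ]

/-- The Voronoi flower of `L` with respect to `x`: the union over `s ∈ L` of the closed
balls admitting the segment `[x, s]` as a diameter. -/
def vflower (x : E2) (L : Set E2) : Set E2 :=
  ⋃ s ∈ L, closedBall ((2:ℝ)⁻¹ • (x + s)) (‖s - x‖ / 2)

/-- The support function of `L` with respect to `x`: `p_x(L, w) = sup_{s ∈ L} ⟨s − x, w⟩`. -/
def suppf (x : E2) (L : Set E2) (w : E2) : ℝ :=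
  sSup ((fun s => ⟪s - x, w⟫) '' L)

/-- The Steiner point: `st(K) = (1/π) ∫₀^{2π} p₀(K, u_θ) · u_θ dθ`. -/
def steinerPt (K : Set E2) : E2 :=
  (π⁻¹ : ℝ) • ∫ θ in (0:ℝ)..(2*π), suppf 0 K (uvec θ) • uvec θ

/-!
Put `g θ = p_σ(K, u_θ)` and `a θ = ⟨x - σ, u_θ⟩`, so that `p_x(K, u_θ) = g θ - a θ`. In polar
coordinates centred at `x`, `F_x(K)` is the region `r ≤ p_x(K, u_θ)`, so its area is
`½ ∫ max (g - a) 0 ^ 2`. The Steiner point enters through two facts: `∫ g a = 0`, which is its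
defining formula, and `g ≥ 0`, i.e. `⟨σ, u_φ⟩ ≤ p_0(K, u_φ)`, which follows by pairing `θ` with its
mirror image `π + 2φ - θ` and using sublinearity of the support function. For `g ≥ 0`,
`max (g - a) 0 ^ 2 ≥ g ^ 2 - 2 g a + min a 0 ^ 2`, and since `a (θ + π) = -a θ`,
`∫ min a 0 ^ 2 = ½ ∫ a ^ 2 = π ‖x - σ‖ ^ 2 / 2`.
Hence `Area F_x(K) ≥ Area F_σ(K) + π ‖x - σ‖ ^ 2 / 4`.
-/

lemma mem_closedBall_midpoint_iff {F : Type*} [NormedAddCommGroup F] [InnerProductSpace ℝ F]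
    (x s y : F) :
    y ∈ closedBall ((2 : ℝ)⁻¹ • (x + s)) (‖s - x‖ / 2) ↔ ‖y - x‖ ^ 2 ≤ ⟪s - x, y - x⟫ := by
  have hcenter : y - (2 : ℝ)⁻¹ • (x + s) = (y - x) - (2 : ℝ)⁻¹ • (s - x) := by module
  have hsq : ‖y - (2 : ℝ)⁻¹ • (x + s)‖ ^ 2
      = ‖y - x‖ ^ 2 - ⟪s - x, y - x⟫ + (‖s - x‖ / 2) ^ 2 := by
    rw [hcenter, norm_sub_sq_real, real_inner_smul_right, norm_smul, real_inner_comm,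
      Real.norm_of_nonneg (by norm_num)]
    ring
  rw [mem_closedBall, dist_eq_norm, ← sq_le_sq₀ (norm_nonneg _) (by positivity), hsq]
  constructor <;> intro h <;> linarith

lemma Function.Periodic.intervalIntegral_comp_sub_left {E : Type*} [NormedAddCommGroup E]
    [NormedSpace ℝ E] {f : ℝ → E} {T : ℝ}
    (hf : Function.Periodic f T) (d : ℝ) : ∫ x in (0)..T, f (d - x) = ∫ x in (0)..T, f x := by
  rw [intervalIntegral.integral_comp_sub_left, sub_zero]
  have := hf.intervalIntegral_add_eq (d - T) 0
  rwa [sub_add_cancel, zero_add] at this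

lemma Function.Periodic.setIntegral_Ioo_neg_pi_pi {E : Type*} [NormedAddCommGroup E]
    [NormedSpace ℝ E] {f : ℝ → E} (hf : Function.Periodic f (2 * π)) :
    ∫ θ in Ioo (-π) π, f θ = ∫ θ in (0)..(2 * π), f θ := by
  rw [← integral_Ioc_eq_integral_Ioo, ← intervalIntegral.integral_of_le (by linarith [pi_pos])]
  have := hf.intervalIntegral_add_eq (-π) 0
  rwa [show -π + 2 * π = π by ring, zero_add] at this

lemma setLIntegral_Ioc_zero_ofReal (b : ℝ) :
    ∫⁻ r in Ioc 0 b, ENNReal.ofReal r = ENNReal.ofReal (max b 0 ^ 2 / 2) := by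
  rcases le_total b 0 with hb | hb
  · simp [Ioc_eq_empty_of_le hb, max_eq_right hb]
  rw [← ofReal_integral_eq_lintegral_ofReal
      (Continuous.integrableOn_Ioc (f := fun r : ℝ => r) continuous_id)
      (ae_restrict_of_forall_mem measurableSet_Ioc fun r (hr : r ∈ Ioc (0 : ℝ) b) => hr.1.le),
    ← intervalIntegral.integral_of_le hb, integral_id, max_eq_left hb]
  ring_nf

lemma sq_div_two_sub_mul_add_le {g a : ℝ} (hg : 0 ≤ g) :
    g ^ 2 / 2 - g * a + min a 0 ^ 2 / 2 ≤ max (g - a) 0 ^ 2 / 2 := by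
  rcases le_total a 0 with ha | ha
  · rw [min_eq_left ha, max_eq_left (by linarith)]; linarith
  · rcases le_total (g - a) 0 with hga | hga
    · rw [min_eq_right ha, max_eq_right hga]; nlinarith
    · rw [min_eq_right ha, max_eq_left hga]; nlinarith

lemma inner_uvec (w : E2) (θ : ℝ) : ⟪w, uvec θ⟫ = w 0 * cos θ + w 1 * sin θ := by
  simp [PiLp.inner_apply, Fin.sum_univ_two, uvec]; ring

@[fun_prop]
lemma continuous_uvec : Continuous uvec :=
  (PiLp.continuous_toLp 2 _).comp (by fun_prop)

lemma norm_uvec (θ : ℝ) : ‖uvec θ‖ = 1 := by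
  rw [EuclideanSpace.norm_eq]; simp [uvec, Fin.sum_univ_two]

lemma uvec_add_pi (θ : ℝ) : uvec (θ + π) = -uvec θ := by
  ext i; fin_cases i <;> simp [uvec]

lemma uvec_periodic : Function.Periodic uvec (2 * π) := by
  intro θ; ext i; fin_cases i <;> simp [uvec]

lemma uvec_sub_uvec_reflect (θ φ : ℝ) :
    uvec θ - uvec (π + 2 * φ - θ) = (2 * ⟪uvec φ, uvec θ⟫) • uvec φ := by
  rw [real_inner_comm, inner_uvec]
  ext i; fin_cases i <;> simp [uvec, cos_sub, sin_sub, cos_two_mul, sin_two_mul, cos_add, sin_add]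
  · ring_nf
  · linear_combination (-2 * sin θ) * sin_sq_add_cos_sq φ

lemma integral_inner_uvec_mul_inner_uvec (w c : E2) :
    ∫ θ in (0)..(2 * π), ⟪w, uvec θ⟫ * ⟪c, uvec θ⟫ = π * ⟪w, c⟫ := by
  have expand : ∀ θ, ⟪w, uvec θ⟫ * ⟪c, uvec θ⟫ = w 0 * c 0 * cos θ ^ 2
      + (w 0 * c 1 + w 1 * c 0) * (sin θ * cos θ) + w 1 * c 1 * sin θ ^ 2 := by
    intro θ; rw [inner_uvec, inner_uvec]; ring
  simp_rw [expand]
  have hi {f : ℝ → ℝ} (hf : Continuous f) : IntervalIntegrable f volume 0 (2 * π) :=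
    hf.intervalIntegrable _ _
  rw [intervalIntegral.integral_add (hi (by fun_prop)) (hi (by fun_prop)),
    intervalIntegral.integral_add (hi (by fun_prop)) (hi (by fun_prop)),
    intervalIntegral.integral_const_mul, intervalIntegral.integral_const_mul,
    intervalIntegral.integral_const_mul, integral_cos_sq, integral_sin_mul_cos₁, integral_sin_sq]
  simp [PiLp.inner_apply, Fin.sum_univ_two]
  ring

lemma integral_min_inner_uvec_sq (c : E2) :
    ∫ θ in (0)..(2 * π), min ⟪c, uvec θ⟫ 0 ^ 2 = π * ‖c‖ ^ 2 / 2 := by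
  set m : ℝ → ℝ := fun θ => min ⟪c, uvec θ⟫ 0 ^ 2
  have hm : Continuous m := by fun_prop
  have hsum (θ : ℝ) : m θ + m (θ + π) = ⟪c, uvec θ⟫ * ⟪c, uvec θ⟫ := by
    simp only [m, uvec_add_pi, inner_neg_right]
    rcases le_total ⟪c, uvec θ⟫ 0 with h | h
    · rw [min_eq_left h, min_eq_right (by linarith)]; ring
    · rw [min_eq_right h, min_eq_left (by linarith)]; ring
  have hshift : ∫ θ in (0)..(2 * π), m (θ + π) = ∫ θ in (0)..(2 * π), m θ := by
    have hper : Function.Periodic m (2 * π) := fun θ => by simp only [m, uvec_periodic θ]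
    rw [intervalIntegral.integral_comp_add_right, zero_add, add_comm,
      hper.intervalIntegral_add_eq π 0, zero_add]
  have := integral_inner_uvec_mul_inner_uvec c c
  rw [← intervalIntegral.integral_congr (fun θ _ => hsum θ),
    intervalIntegral.integral_add (hm.intervalIntegrable _ _)
      ((by fun_prop : Continuous fun θ => m (θ + π)).intervalIntegrable _ _), hshift,
    real_inner_self_eq_norm_sq] at this
  linarith

lemma volume_eq_of_smul_uvec_mem_iff {S : Set E2} (hS : MeasurableSet S) {ρ : ℝ → ℝ}
    (hρ : Continuous ρ) (hper : Function.Periodic ρ (2 * π))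
    (hmem : ∀ r > 0, ∀ θ, r • uvec θ ∈ S ↔ r ≤ ρ θ) :
    volume S = ENNReal.ofReal (∫ θ in (0)..(2 * π), max (ρ θ) 0 ^ 2 / 2) := by
  set mk : ℝ × ℝ → E2 := fun p => WithLp.toLp 2 ![p.1, p.2]
  have hmk : MeasurePreserving mk :=
    (PiLp.volume_preserving_toLp (Fin 2)).comp (volume_preserving_finTwoArrow ℝ).symm
  set G : ℝ × ℝ → ENNReal := {p | p.1 ≤ ρ p.2}.indicator fun p => ENNReal.ofReal p.1
  have hG : Measurable G :=
    measurable_fst.ennreal_ofReal.indicator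
      (measurableSet_le measurable_fst (hρ.measurable.comp measurable_snd))
  have polar : volume S = ∫⁻ p in polarCoord.target, G p := by
    rw [← hmk.measure_preimage hS.nullMeasurableSet,
      ← lintegral_indicator_one (hS.preimage hmk.measurable), ← lintegral_comp_polarCoord_symm]
    refine setLIntegral_congr_fun polarCoord.open_target.measurableSet fun p hp => ?_
    have hpolar : mk (polarCoord.symm p) = p.1 • uvec p.2 := by
      ext i; fin_cases i <;> simp [mk, uvec, polarCoord_symm_apply]
    simp only [G, Set.indicator, mem_preimage, hpolar, hmem p.1 hp.1, mem_ofPred_eq, Pi.one_apply]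
    split_ifs <;> simp
  have fubini : ∫⁻ p in polarCoord.target, G p
      = ∫⁻ θ in Ioo (-π) π, ENNReal.ofReal (max (ρ θ) 0 ^ 2 / 2) := by
    rw [polarCoord_target, Measure.volume_eq_prod, ← Measure.prod_restrict,
      lintegral_prod_symm' _ hG]
    refine setLIntegral_congr_fun measurableSet_Ioo fun θ _ => ?_
    rw [← setLIntegral_Ioc_zero_ofReal, ← lintegral_indicator measurableSet_Ioc,
      ← lintegral_indicator measurableSet_Ioi]
    congr 1; ext r
    simp only [G, Set.indicator, mem_Ioi, mem_Ioc, mem_ofPred_eq]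
    split_ifs <;> simp_all
  have hint : IntegrableOn (fun θ => max (ρ θ) 0 ^ 2 / 2) (Ioo (-π) π) :=
    (by fun_prop : Continuous fun θ => max (ρ θ) 0 ^ 2 / 2).integrableOn_Icc.mono_set
      Ioo_subset_Icc_self
  rw [polar, fubini,
    ← ofReal_integral_eq_lintegral_ofReal hint (ae_of_all _ fun θ => by positivity),
    Function.Periodic.setIntegral_Ioo_neg_pi_pi fun θ => by simp only [hper θ]]

section SupportFunction

variable {K : Set E2}

lemma inner_sub_le_suppf (hK : IsCompact K) {s : E2} (hs : s ∈ K) (x w : E2) :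
    ⟪s - x, w⟫ ≤ suppf x K w :=
  le_csSup ((hK.image (by fun_prop)).bddAbove) (mem_image_of_mem _ hs)

lemma exists_mem_suppf_eq (hK : IsCompact K) (hne : K.Nonempty) (x w : E2) :
    ∃ s ∈ K, suppf x K w = ⟪s - x, w⟫ := by
  obtain ⟨s, hs, h⟩ := (hK.image (f := fun s => ⟪s - x, w⟫) (by fun_prop)).sSup_mem (hne.image _)
  exact ⟨s, hs, h.symm⟩

lemma suppf_eq_suppf_sub (hK : IsCompact K) (hne : K.Nonempty) (x y w : E2) :
    suppf x K w = suppf y K w - ⟪x - y, w⟫ := by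
  obtain ⟨s, hs, hx⟩ := exists_mem_suppf_eq hK hne x w
  obtain ⟨t, ht, hy⟩ := exists_mem_suppf_eq hK hne y w
  have hsx := inner_sub_le_suppf hK hs y w
  have hty := inner_sub_le_suppf hK ht x w
  have shift : ∀ u : E2, ⟪u - x, w⟫ = ⟪u - y, w⟫ - ⟪x - y, w⟫ := fun u => by
    rw [← inner_sub_left]; congr 1; abel
  rw [shift] at hx hty
  linarith

lemma suppf_smul (x : E2) (L : Set E2) {r : ℝ} (hr : 0 ≤ r) (w : E2) :
    suppf x L (r • w) = r * suppf x L w := by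
  simp only [suppf, inner_smul_right]
  rw [← smul_eq_mul, ← Real.sSup_smul_of_nonneg hr, ← image_smul, image_image]
  rfl

lemma suppf_add_le (hK : IsCompact K) (hne : K.Nonempty) (x v w : E2) :
    suppf x K (v + w) ≤ suppf x K v + suppf x K w := by
  obtain ⟨s, hs, h⟩ := exists_mem_suppf_eq hK hne x (v + w)
  rw [h, inner_add_right]
  exact add_le_add (inner_sub_le_suppf hK hs x v) (inner_sub_le_suppf hK hs x w)

lemma continuous_suppf (hK : IsCompact K) (x : E2) : Continuous (suppf x K) :=
  hK.continuous_sSup (f := fun w s => ⟪s - x, w⟫) (by fun_prop)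

lemma mul_sub_suppf_le (hK : IsCompact K) (hne : K.Nonempty) (x : E2) {a b w : E2} {t : ℝ}
    (h : a - b = t • w) : t * (suppf x K a - suppf x K b) ≤ t ^ 2 * suppf x K w := by
  rcases le_total 0 t with ht | ht
  · have := suppf_add_le hK hne x b (t • w)
    rw [show b + t • w = a by rw [← h]; abel, suppf_smul x K ht] at this
    nlinarith
  · have := suppf_add_le hK hne x a ((-t) • w)
    rw [show a + (-t) • w = b by rw [neg_smul, ← h]; abel, suppf_smul x K (by linarith)] at this
    nlinarith

end SupportFunction

lemma mem_vflower_iff {K : Set E2} (hK : IsCompact K) (hne : K.Nonempty) (x y : E2) :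
    y ∈ vflower x K ↔ ‖y - x‖ ^ 2 ≤ suppf x K (y - x) := by
  simp only [vflower, mem_iUnion, exists_prop, mem_closedBall_midpoint_iff]
  constructor
  · rintro ⟨s, hs, h⟩
    exact h.trans (inner_sub_le_suppf hK hs x _)
  · intro h
    obtain ⟨s, hs, hsup⟩ := exists_mem_suppf_eq hK hne x (y - x)
    exact ⟨s, hs, hsup ▸ h⟩

lemma area_vflower {K : Set E2} (hK : IsCompact K) (hne : K.Nonempty) (x : E2) :
    (volume (vflower x K)).toReal = ∫ θ in (0)..(2 * π), max (suppf x K (uvec θ)) 0 ^ 2 / 2 := by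
  set T : Set E2 := {z | ‖z‖ ^ 2 ≤ suppf x K z}
  have hflower : vflower x K = (· + -x) ⁻¹' T := by
    ext y; simp [T, mem_vflower_iff hK hne, sub_eq_add_neg]
  have hT : MeasurableSet T := (isClosed_le (by fun_prop) (continuous_suppf hK x)).measurableSet
  have hmem (r : ℝ) (hr : 0 < r) (θ : ℝ) : r • uvec θ ∈ T ↔ r ≤ suppf x K (uvec θ) := by
    simp only [T, mem_ofPred_eq, norm_smul, norm_uvec, suppf_smul x K hr.le,
      Real.norm_of_nonneg hr.le]
    rw [mul_one, sq, mul_le_mul_iff_right₀ hr]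
  rw [hflower, measure_preimage_add_right,
    volume_eq_of_smul_uvec_mem_iff (ρ := fun θ => suppf x K (uvec θ)) hT
      ((continuous_suppf hK x).comp continuous_uvec) (fun θ => by simp only [uvec_periodic θ])
      hmem,
    ENNReal.toReal_ofReal
      (intervalIntegral.integral_nonneg two_pi_pos.le fun θ _ => by positivity)]

section SteinerPoint

variable {K : Set E2}

lemma pi_mul_inner_steinerPt (hK : IsCompact K) (c : E2) :
    π * ⟪c, steinerPt K⟫ = ∫ θ in (0)..(2 * π), suppf 0 K (uvec θ) * ⟪c, uvec θ⟫ := by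
  have hint : IntervalIntegrable (fun θ => suppf 0 K (uvec θ) • uvec θ) volume 0 (2 * π) :=
    (((continuous_suppf hK 0).comp continuous_uvec).smul continuous_uvec).intervalIntegrable _ _
  have := (innerSL ℝ c).intervalIntegral_comp_comm hint
  simp only [innerSL_apply_apply, inner_smul_right] at this
  rw [steinerPt, inner_smul_right, ← mul_assoc, mul_inv_cancel₀ pi_ne_zero, one_mul, this]

lemma inner_uvec_steinerPt_le (hK : IsCompact K) (hne : K.Nonempty) (φ : ℝ) :
    ⟪uvec φ, steinerPt K⟫ ≤ suppf 0 K (uvec φ) := by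
  set p : ℝ → ℝ := fun θ => suppf 0 K (uvec θ)
  set t : ℝ → ℝ := fun θ => ⟪uvec φ, uvec θ⟫
  have hp : Continuous p := (continuous_suppf hK 0).comp continuous_uvec
  have ht : Continuous t := by fun_prop
  have reflect (θ : ℝ) : t (π + 2 * φ - θ) = -t θ := by
    have := congrArg (⟪uvec φ, ·⟫) (uvec_sub_uvec_reflect θ φ)
    simp only [inner_sub_right, inner_smul_right, real_inner_self_eq_norm_sq, norm_uvec] at this
    simp only [t]; linarith
  have pointwise (θ : ℝ) : t θ * p θ - t θ * p (π + 2 * φ - θ) ≤ 2 * t θ ^ 2 * p φ := by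
    have := mul_sub_suppf_le hK hne 0 (uvec_sub_uvec_reflect θ φ)
    simp only [p, t] at this ⊢
    nlinarith
  have hper : Function.Periodic (fun θ => t θ * p θ) (2 * π) := by
    intro θ; simp only [t, p, uvec_periodic θ]
  have reflected :
      ∫ θ in (0)..(2 * π), t θ * p (π + 2 * φ - θ) = -∫ θ in (0)..(2 * π), t θ * p θ := by
    rw [← hper.intervalIntegral_comp_sub_left (π + 2 * φ), ← intervalIntegral.integral_neg]
    congr 1; ext θ; rw [reflect]; ring
  have hi {f : ℝ → ℝ} (hf : Continuous f) : IntervalIntegrable f volume 0 (2 * π) :=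
    hf.intervalIntegrable _ _
  have hmono : ∫ θ in (0)..(2 * π), (t θ * p θ - t θ * p (π + 2 * φ - θ))
      ≤ ∫ θ in (0)..(2 * π), 2 * t θ ^ 2 * p φ :=
    intervalIntegral.integral_mono_on two_pi_pos.le (hi (by fun_prop)) (hi (by fun_prop))
      fun θ _ => pointwise θ
  rw [intervalIntegral.integral_sub (hi (by fun_prop)) (hi (by fun_prop)), reflected,
    intervalIntegral.integral_mul_const, intervalIntegral.integral_const_mul] at hmono
  have hsq : ∫ θ in (0)..(2 * π), t θ ^ 2 = π := by
    simp only [t, sq, integral_inner_uvec_mul_inner_uvec, real_inner_self_eq_norm_sq, norm_uvec]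
    ring
  have hσ := pi_mul_inner_steinerPt hK (uvec φ)
  simp only [mul_comm (suppf 0 K _)] at hσ
  rw [hsq] at hmono
  nlinarith [pi_pos]

lemma suppf_steinerPt_nonneg (hK : IsCompact K) (hne : K.Nonempty) (θ : ℝ) :
    0 ≤ suppf (steinerPt K) K (uvec θ) := by
  rw [suppf_eq_suppf_sub hK hne _ 0, sub_zero, real_inner_comm]
  linarith [inner_uvec_steinerPt_le hK hne θ]

lemma integral_suppf_steinerPt_mul_inner (hK : IsCompact K) (hne : K.Nonempty) (c : E2) :
    ∫ θ in (0)..(2 * π), suppf (steinerPt K) K (uvec θ) * ⟪c, uvec θ⟫ = 0 := by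
  have hsub (θ : ℝ) :
      suppf (steinerPt K) K (uvec θ) = suppf 0 K (uvec θ) - ⟪steinerPt K, uvec θ⟫ := by
    rw [suppf_eq_suppf_sub hK hne _ 0, sub_zero]
  simp only [hsub, sub_mul]
  have hp : Continuous fun θ => suppf 0 K (uvec θ) * ⟪c, uvec θ⟫ :=
    ((continuous_suppf hK 0).comp continuous_uvec).mul (by fun_prop)
  have hq : Continuous fun θ => ⟪steinerPt K, uvec θ⟫ * ⟪c, uvec θ⟫ := by fun_prop
  rw [intervalIntegral.integral_sub (hp.intervalIntegrable _ _) (hq.intervalIntegrable _ _),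
    ← pi_mul_inner_steinerPt hK, integral_inner_uvec_mul_inner_uvec, real_inner_comm, sub_self]

lemma area_vflower_steinerPt_add_le (hK : IsCompact K) (hne : K.Nonempty) (x : E2) :
    (volume (vflower (steinerPt K) K)).toReal + π * ‖x - steinerPt K‖ ^ 2 / 4
      ≤ (volume (vflower x K)).toReal := by
  set σ := steinerPt K
  set g : ℝ → ℝ := fun θ => suppf σ K (uvec θ)
  set a : ℝ → ℝ := fun θ => ⟪x - σ, uvec θ⟫
  have hg : Continuous g := (continuous_suppf hK σ).comp continuous_uvec
  have ha : Continuous a := by fun_prop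
  have hi {f : ℝ → ℝ} (hf : Continuous f) : IntervalIntegrable f volume 0 (2 * π) :=
    hf.intervalIntegrable _ _
  have hg₀ : ∀ θ, 0 ≤ g θ := suppf_steinerPt_nonneg hK hne
  have hσ : ∫ θ in (0)..(2 * π), max (g θ) 0 ^ 2 / 2 = ∫ θ in (0)..(2 * π), g θ ^ 2 / 2 :=
    intervalIntegral.integral_congr fun θ _ => by rw [max_eq_left (hg₀ θ)]
  have hx : ∫ θ in (0)..(2 * π), max (suppf x K (uvec θ)) 0 ^ 2 / 2
      = ∫ θ in (0)..(2 * π), max (g θ - a θ) 0 ^ 2 / 2 := by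
    simp only [g, a, suppf_eq_suppf_sub hK hne x σ]
  have hmin : ∫ θ in (0)..(2 * π), min (a θ) 0 ^ 2 = π * ‖x - σ‖ ^ 2 / 2 :=
    integral_min_inner_uvec_sq _
  have hmono : ∫ θ in (0)..(2 * π), (g θ ^ 2 / 2 - g θ * a θ + min (a θ) 0 ^ 2 / 2)
      ≤ ∫ θ in (0)..(2 * π), max (g θ - a θ) 0 ^ 2 / 2 :=
    intervalIntegral.integral_mono_on two_pi_pos.le (hi (by fun_prop)) (hi (by fun_prop))
      fun θ _ => sq_div_two_sub_mul_add_le (hg₀ θ)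
  rw [intervalIntegral.integral_add (hi (by fun_prop)) (hi (by fun_prop)),
    intervalIntegral.integral_sub (hi (by fun_prop)) (hi (by fun_prop)),
    integral_suppf_steinerPt_mul_inner hK hne, intervalIntegral.integral_div,
    intervalIntegral.integral_div, hmin] at hmono
  rw [area_vflower hK hne, area_vflower hK hne, hσ, hx, intervalIntegral.integral_div]
  linarith

end SteinerPoint

theorem steiner_unique_minimizer_general (K : Set E2) (hKc : IsCompact K)
    (hKint : (interior K).Nonempty) (σ : E2)
    (hσ : σ = steinerPt K) :
    ∀ x : E2, x ≠ σ →
      (volume (vflower σ K)).toReal < (volume (vflower x K)).toReal := by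
  intro x hx
  subst hσ
  have hne : K.Nonempty := hKint.mono interior_subset
  have hgap : 0 < π * ‖x - steinerPt K‖ ^ 2 / 4 := by
    have := norm_pos_iff.mpr (sub_ne_zero.mpr hx)
    positivity
  linarith [area_vflower_steinerPt_add_le hKc hne x]

/-- the Steiner point `σ = st(K)` is the unique minimizer of
`x ↦ Area(F_x(K))`. -/
theorem steiner_unique_minimizer (K : Set E2) (hKc : IsCompact K)
    (hKconv : Convex ℝ K) (hKint : (interior K).Nonempty) (σ : E2)
    (hσ : σ = steinerPt K) :
    ∀ x : E2, x ≠ σ →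
      (volume (vflower σ K)).toReal < (volume (vflower x K)).toReal :=
  steiner_unique_minimizer_general K hKc hKint σ hσ
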